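/- arXiv:2002.00483 — 3 statements merged into one kernel-verified Lean document; each statement's English description precedes it below -/
import Mathlib

section
/- Let N be a temporal normal network on X, and let {a, b, c} be a double-reticulated cherry of N in which b is the reticulation leaf. If N' is obtained from N by deleting b (that is, deleting b, p_b, and their incident arcs, and suppressing the two resulting degree-two vertices p_a and p_c), then N' is a temporal normal network on X − {b}. -/
/-- A (raw) phylogenetic network structure: a vertex type, an arc relation
(arcs are directed; since `arc` is a relation there are no parallel arcs),
and a labelling of the (potential) leaves by elements of `α`. -/
structure PhyloNet (α : Type) : Type 1 where
  V : Type
  arc : V → V → Prop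
  leafMap : α → V

namespace PhyloNet

variable {α : Type}

/-- In-degree of a vertex. -/
noncomputable def inDeg (N : PhyloNet α) (v : N.V) : ℕ := {u : N.V | N.arc u v}.ncard

/-- Out-degree of a vertex. -/
noncomputable def outDeg (N : PhyloNet α) (v : N.V) : ℕ := {u : N.V | N.arc v u}.ncard

/-- A leaf is a vertex of out-degree zero. -/
def IsLeaf (N : PhyloNet α) (v : N.V) : Prop := N.outDeg v = 0

/-- A reticulation is a vertex of in-degree two. -/
def IsRet (N : PhyloNet α) (v : N.V) : Prop := N.inDeg v = 2

/-- A tree vertex has in-degree one and out-degree two. -/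
def IsTreeVert (N : PhyloNet α) (v : N.V) : Prop := N.inDeg v = 1 ∧ N.outDeg v = 2

/-- A root: in-degree zero and every vertex is reachable from it. -/
def IsRoot (N : PhyloNet α) (r : N.V) : Prop :=
  N.inDeg r = 0 ∧ ∀ v : N.V, Relation.ReflTransGen N.arc r v

/-- `N` is a rooted binary phylogenetic network on the (nonempty, finite) leaf set `X`. -/
structure IsNetworkOn (N : PhyloNet α) (X : Finset α) : Prop where
  nonemptyX : X.Nonempty
  finiteV : Finite N.V
  acyclic : ∀ v : N.V, ¬ Relation.TransGen N.arc v v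
  rooted : ∃ r : N.V, N.IsRoot r
  leaf_isLeaf : ∀ x ∈ X, N.IsLeaf (N.leafMap x)
  leaf_inj : ∀ x ∈ X, ∀ y ∈ X, N.leafMap x = N.leafMap y → x = y
  leaf_surj : ∀ v : N.V, N.IsLeaf v → ∃ x ∈ X, N.leafMap x = v
  degrees : (X.card = 1 ∧ Subsingleton N.V) ∨
    (∀ v : N.V,
      (N.inDeg v = 0 ∧ N.outDeg v = 2) ∨ (N.inDeg v = 1 ∧ N.outDeg v = 0) ∨
      (N.inDeg v = 1 ∧ N.outDeg v = 2) ∨ (N.inDeg v = 2 ∧ N.outDeg v = 1))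

/-- A phylogenetic tree is a phylogenetic network with no reticulations. -/
def IsTree (N : PhyloNet α) : Prop := ∀ v : N.V, ¬ N.IsRet v

/-- Tree-child: every non-leaf vertex has a child that is not a reticulation
(i.e. a child that is a tree vertex or a leaf). -/
def TreeChild (N : PhyloNet α) : Prop :=
  ∀ v : N.V, ¬ N.IsLeaf v → ∃ w : N.V, N.arc v w ∧ ¬ N.IsRet w

/-- A shortcut: a reticulation arc `(u, v)` such that there is a directed path
from `u` to `v` avoiding the arc `(u, v)`. -/
def Shortcut (N : PhyloNet α) (u v : N.V) : Prop :=
  N.arc u v ∧ N.IsRet v ∧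
    Relation.TransGen (fun p q => N.arc p q ∧ ¬(p = u ∧ q = v)) u v

/-- Normal: tree-child with no shortcuts. -/
def Normal (N : PhyloNet α) : Prop := N.TreeChild ∧ ∀ u v : N.V, ¬ N.Shortcut u v

/-- Temporal: there is a time map, with positive values, that is constant on
reticulation arcs and strictly increasing on tree arcs. -/
def Temporal (N : PhyloNet α) : Prop :=
  ∃ t : N.V → ℝ, (∀ v : N.V, 0 < t v) ∧
    ∀ u v : N.V, N.arc u v → ((N.IsRet v → t u = t v) ∧ (¬ N.IsRet v → t u < t v))

/-- A system of directed paths in `N` with prescribed endpoints, pairwise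
internally vertex-disjoint (two different paths meet only in common endpoints). -/
def PathSys (N : PhyloNet α) (es : List (N.V × N.V)) : Prop :=
  ∃ P : N.V × N.V → List N.V,
    (∀ e ∈ es, (P e).Chain' N.arc ∧ (P e).head? = some e.1 ∧ (P e).getLast? = some e.2) ∧
    (∀ e ∈ es, ∀ e' ∈ es, e ≠ e' → ∀ w ∈ P e, w ∈ P e' →
      (w = e.1 ∨ w = e.2) ∧ (w = e'.1 ∨ w = e'.2))

/-- `N` displays the triple `xy|z`: a subdivision of the caterpillar `(x, y, z)`
is a subgraph of `N`. -/
def DisplaysTriple (N : PhyloNet α) (X : Finset α) (x y z : α) : Prop :=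
  x ∈ X ∧ y ∈ X ∧ z ∈ X ∧ x ≠ y ∧ x ≠ z ∧ y ≠ z ∧
  ∃ r v : N.V, ([r, v, N.leafMap x, N.leafMap y, N.leafMap z]).Pairwise (· ≠ ·) ∧
    N.PathSys [(r, v), (v, N.leafMap x), (v, N.leafMap y), (r, N.leafMap z)]

/-- `N` displays the quad (caterpillar) `(x₁, x₂, x₃, x₄)`: a subdivision of the
caterpillar on four leaves is a subgraph of `N`. -/
def DisplaysQuad (N : PhyloNet α) (X : Finset α) (x₁ x₂ x₃ x₄ : α) : Prop :=
  x₁ ∈ X ∧ x₂ ∈ X ∧ x₃ ∈ X ∧ x₄ ∈ X ∧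
  x₁ ≠ x₂ ∧ x₁ ≠ x₃ ∧ x₁ ≠ x₄ ∧ x₂ ≠ x₃ ∧ x₂ ≠ x₄ ∧ x₃ ≠ x₄ ∧
  ∃ r q p : N.V,
    ([r, q, p, N.leafMap x₁, N.leafMap x₂, N.leafMap x₃, N.leafMap x₄]).Pairwise (· ≠ ·) ∧
    N.PathSys [(r, q), (q, p), (p, N.leafMap x₁), (p, N.leafMap x₂),
               (q, N.leafMap x₃), (r, N.leafMap x₄)]

/-- `N` displays the phylogenetic tree `T` with leaf set `X'`: a subdivision of
`T` is a subgraph of `N`, with the leaves labelled consistently. -/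
def Displays (N T : PhyloNet α) (X' : Finset α) : Prop :=
  ∃ (f : T.V → N.V) (P : T.V → T.V → List N.V),
    Function.Injective f ∧
    (∀ x ∈ X', f (T.leafMap x) = N.leafMap x) ∧
    (∀ u v : T.V, T.arc u v →
      (P u v).Chain' N.arc ∧ (P u v).head? = some (f u) ∧ (P u v).getLast? = some (f v)) ∧
    (∀ u v u' v' : T.V, T.arc u v → T.arc u' v' → (u, v) ≠ (u', v') →
      ∀ w : N.V, w ∈ P u v → w ∈ P u' v' →
        (w = f u ∨ w = f v) ∧ (w = f u' ∨ w = f v')) ∧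
    (∀ u v w : T.V, T.arc u v → f w ∈ P u v → w = u ∨ w = v)

/-- Isomorphism of two phylogenetic networks on `X`: an arc-preserving bijection
of the vertex sets fixing every leaf label in `X`. -/
def Isom (N N' : PhyloNet α) (X : Finset α) : Prop :=
  ∃ φ : N.V ≃ N'.V, (∀ x ∈ X, φ (N.leafMap x) = N'.leafMap x) ∧
    ∀ u v : N.V, N.arc u v ↔ N'.arc (φ u) (φ v)

/-- `{a, b}` is a cherry: the leaves `a` and `b` have the same parent. -/
def Cherry (N : PhyloNet α) (a b : α) : Prop :=
  a ≠ b ∧ ∃ p : N.V, N.arc p (N.leafMap a) ∧ N.arc p (N.leafMap b)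

/-- `{a, b}` is a reticulated cherry with reticulation leaf `b`:
the parent of `b` is a reticulation and there is an arc from the parent of `a`
to the parent of `b`. -/
def RetCherry (N : PhyloNet α) (a b : α) : Prop :=
  a ≠ b ∧ ∃ pa pb : N.V, N.arc pa (N.leafMap a) ∧ N.arc pb (N.leafMap b) ∧
    N.IsRet pb ∧ N.arc pa pb

/-- `{a, b, c}` is a double-reticulated cherry with reticulation leaf `b`. -/
def DoubleRetCherry (N : PhyloNet α) (a b c : α) : Prop :=
  a ≠ b ∧ b ≠ c ∧ a ≠ c ∧
  ∃ pa pb pc : N.V, N.arc pa (N.leafMap a) ∧ N.arc pb (N.leafMap b) ∧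
    N.arc pc (N.leafMap c) ∧ N.IsRet pb ∧ N.arc pa pb ∧ N.arc pc pb

/-- There is a directed path from `a` to `b` that avoids the vertex `u` entirely. -/
def AvoidReach (N : PhyloNet α) (u a b : N.V) : Prop :=
  a ≠ u ∧ b ≠ u ∧ Relation.ReflTransGen (fun p q => N.arc p q ∧ p ≠ u ∧ q ≠ u) a b

/-- The visibility set of a vertex `u`: the leaves `x ∈ X` such that every
directed path from the root to `x` traverses `u`. -/
def visSet (N : PhyloNet α) (X : Finset α) (u : N.V) : Set α :=
  {x | x ∈ X ∧ ∀ r : N.V, N.IsRoot r → ¬ N.AvoidReach u r (N.leafMap x)}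

/-- The cluster set of a vertex `u`: the leaves `x ∈ X` reachable from `u`. -/
def clusterSet (N : PhyloNet α) (X : Finset α) (u : N.V) : Set α :=
  {x | x ∈ X ∧ Relation.ReflTransGen N.arc u (N.leafMap x)}

/-- A tree path from `u` to `v`: a directed path in which every vertex except
`v` (and possibly `u`) is a tree vertex. -/
def TreePathTo (N : PhyloNet α) (u v : N.V) : Prop :=
  ∃ l : List N.V, l.Chain' N.arc ∧ l.head? = some u ∧ l.getLast? = some v ∧
    ∀ w ∈ l, w ≠ u → w ≠ v → N.IsTreeVert w

/-- A candidate set for `b` (relative to `a`). -/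
def CandidateSet (N : PhyloNet α) (X : Finset α) (a b : α) (W : Set α) : Prop :=
  W.Nonempty ∧ W ⊆ (↑X : Set α) \ {a, b} ∧
  (∀ c ∈ W, ∀ x ∈ X, x ∉ W → x ≠ b →
    N.DisplaysTriple X b c x ∧ ¬ N.DisplaysTriple X a c b) ∧
  (∀ c ∈ W, ∀ c' ∈ W, c ≠ c' → ¬ N.DisplaysTriple X b c c') ∧
  (∀ c ∈ W, ∀ x ∈ X, x ∉ W → x ≠ a → x ≠ b → ¬ N.DisplaysQuad X x b c a)

/-- `N'` is obtained from `N` by deleting the leaf `b` of the cherry `{a, b}`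
(with common parent `p`): delete `b` and its incident arc, and suppress `p`. -/
def DelCherry (N N' : PhyloNet α) (X : Finset α) (a b : α) : Prop :=
  ∃ (p : N.V) (j : N'.V → N.V),
    N.arc p (N.leafMap a) ∧ N.arc p (N.leafMap b) ∧
    Function.Injective j ∧
    (∀ x ∈ X, x ≠ b → j (N'.leafMap x) = N.leafMap x) ∧
    (∀ v : N.V, v ≠ p → v ≠ N.leafMap b → ∃ w : N'.V, j w = v) ∧
    (∀ w : N'.V, j w ≠ p ∧ j w ≠ N.leafMap b) ∧
    (∀ u v : N'.V, N'.arc u v ↔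
      (N.arc (j u) (j v) ∨ (N.arc (j u) p ∧ N.arc p (j v))))

/-- `N'` is obtained from `N` by deleting the reticulation leaf `b` of the
reticulated cherry `{a, b}`: delete `b`, its parent `pb` and their incident
arcs, and suppress the parent `pa` of `a` and the other parent `gb` of `pb`. -/
def DelRetCherry (N N' : PhyloNet α) (X : Finset α) (a b : α) : Prop :=
  ∃ (pa pb gb : N.V) (j : N'.V → N.V),
    N.arc pa (N.leafMap a) ∧ N.arc pb (N.leafMap b) ∧ N.IsRet pb ∧
    N.arc pa pb ∧ N.arc gb pb ∧ gb ≠ pa ∧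
    Function.Injective j ∧
    (∀ x ∈ X, x ≠ b → j (N'.leafMap x) = N.leafMap x) ∧
    (∀ v : N.V, v ∉ ({pa, pb, gb, N.leafMap b} : Set N.V) → ∃ w : N'.V, j w = v) ∧
    (∀ w : N'.V, j w ∉ ({pa, pb, gb, N.leafMap b} : Set N.V)) ∧
    (∀ u v : N'.V, N'.arc u v ↔
      (N.arc (j u) (j v) ∨ (N.arc (j u) pa ∧ N.arc pa (j v)) ∨
       (N.arc (j u) gb ∧ N.arc gb (j v))))

/-- `N'` is obtained from `N` by deleting the reticulation leaf `b` of the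
double-reticulated cherry `{a, b, c}`: delete `b`, `pb` and their incident
arcs, and suppress `pa` and `pc`. -/
def DelDoubleRetCherry (N N' : PhyloNet α) (X : Finset α) (a b c : α) : Prop :=
  ∃ (pa pb pc : N.V) (j : N'.V → N.V),
    N.arc pa (N.leafMap a) ∧ N.arc pb (N.leafMap b) ∧ N.arc pc (N.leafMap c) ∧
    N.IsRet pb ∧ N.arc pa pb ∧ N.arc pc pb ∧
    Function.Injective j ∧
    (∀ x ∈ X, x ≠ b → j (N'.leafMap x) = N.leafMap x) ∧
    (∀ v : N.V, v ∉ ({pa, pb, pc, N.leafMap b} : Set N.V) → ∃ w : N'.V, j w = v) ∧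
    (∀ w : N'.V, j w ∉ ({pa, pb, pc, N.leafMap b} : Set N.V)) ∧
    (∀ u v : N'.V, N'.arc u v ↔
      (N.arc (j u) (j v) ∨ (N.arc (j u) pa ∧ N.arc pa (j v)) ∨
       (N.arc (j u) pc ∧ N.arc pc (j v))))

end PhyloNet

/-!
Around the cherry, `N` looks like `ga → pa → {la, pb}`, `gc → pc → {lc, pb}`, `pb → lb`, with
`la, lb, lc` the leaves `a, b, c`: the parents of leaves and of the reticulation `pb` are forced by
the degrees, and `pa` is not the root because only `pa, la, pb, lb` lie below it (symmetrically for
`pc`). Deleting `b` and suppressing `pa`, `pc` replaces these paths by the arcs `ga → la` and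
`gc → lc`, so the embedding `j` of `N'` into `N` matches the arcs at every vertex of `N'` with
those at its image. Hence `j` preserves in- and out-degrees, arcs of `N'` lift to paths of `N`,
and paths of `N` from the root push down to `N'`: `N'` is a network whose reticulations and
leaves are those of `N`. A tree child in `N` of `j w` is, or is suppressed into, a tree child of
`w`; a shortcut of `N'` would end at a reticulation, so it is an arc of `N` and lifts to a
shortcut of `N`; and `t ∘ j` is a time map since `ga → pa → la` and `gc → pc → lc` are paths of
tree arcs.
-/

theorem Set.eq_or_eq_of_ncard_eq_two {β : Type*} {s : Set β} {x y u : β} (h : s.ncard = 2)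
    (hx : x ∈ s) (hy : y ∈ s) (hxy : x ≠ y) (hu : u ∈ s) : u = x ∨ u = y := by
  obtain ⟨p, q, -, rfl⟩ := Set.ncard_eq_two.mp h
  simp only [Set.mem_insert_iff, Set.mem_singleton_iff] at hx hy hu
  grind

theorem Relation.ReflTransGen.mem_of_closed {β : Type*} {r : β → β → Prop} {s : Set β}
    (hs : ∀ u v, u ∈ s → r u v → v ∈ s) {x y : β} (hx : x ∈ s)
    (h : Relation.ReflTransGen r x y) : y ∈ s := by
  induction h with
  | refl => exact hx
  | tail _ hyz ih => exact hs _ _ ih hyz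

namespace PhyloNet

variable {α : Type} {N N' : PhyloNet α}

section Neighbours

variable {u v p q r : N.V}

theorem arc_iff_of_inDeg_eq_one (h : N.inDeg v = 1) (hp : N.arc p v) :
    N.arc u v ↔ u = p := by
  obtain ⟨z, hz⟩ := Set.ncard_eq_one.mp h
  have hz (u : N.V) : N.arc u v ↔ u = z := Set.ext_iff.mp hz u
  rw [hz, (hz p).mp hp]

theorem arc_iff_of_outDeg_eq_one (h : N.outDeg v = 1) (hp : N.arc v p) :
    N.arc v u ↔ u = p := by
  obtain ⟨z, hz⟩ := Set.ncard_eq_one.mp h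
  have hz (u : N.V) : N.arc v u ↔ u = z := Set.ext_iff.mp hz u
  rw [hz, (hz p).mp hp]

theorem arc_iff_of_inDeg_eq_two (h : N.inDeg v = 2) (hp : N.arc p v) (hq : N.arc q v)
    (hpq : p ≠ q) : N.arc u v ↔ u = p ∨ u = q :=
  ⟨Set.eq_or_eq_of_ncard_eq_two h hp hq hpq, by rintro (rfl | rfl) <;> assumption⟩

theorem arc_iff_of_outDeg_eq_two (h : N.outDeg v = 2) (hp : N.arc v p) (hq : N.arc v q)
    (hpq : p ≠ q) : N.arc v u ↔ u = p ∨ u = q :=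
  ⟨Set.eq_or_eq_of_ncard_eq_two h hp hq hpq, by rintro (rfl | rfl) <;> assumption⟩

theorem not_isRet_of_arc_iff (h : ∀ u, N.arc u v ↔ u = p) : ¬ N.IsRet v := by
  simp [IsRet, show N.inDeg v = 1 from Set.ncard_eq_one.mpr ⟨p, Set.ext h⟩]

variable [Finite N.V]

theorem IsLeaf.not_arc (h : N.IsLeaf v) : ¬ N.arc v u := by
  intro hu
  have : u ∈ {u | N.arc v u} := hu
  rwa [(Set.ncard_eq_zero).mp h] at this

theorem isLeaf_of_forall_not_arc (h : ∀ u, ¬ N.arc v u) : N.IsLeaf v :=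
  (Set.ncard_eq_zero).mpr (Set.eq_empty_of_forall_notMem h)

theorem inDeg_ne_zero_of_arc (h : N.arc u v) : N.inDeg v ≠ 0 :=
  ((Set.ncard_pos).mpr ⟨u, h⟩).ne'

theorem IsRoot.eq_of_inDeg_eq_zero (hr : N.IsRoot r) (hv : N.inDeg v = 0) : v = r := by
  rcases (hr.2 v).cases_tail with h | ⟨u, -, hu⟩
  · exact h
  · exact absurd hv (inDeg_ne_zero_of_arc hu)

theorem IsRoot.ne_of_arc (hr : N.IsRoot r) (h : N.arc u v) : r ≠ v := by
  rintro rfl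
  exact inDeg_ne_zero_of_arc h hr.1

end Neighbours

namespace IsNetworkOn

variable {X : Finset α} {u v p q : N.V}

theorem irrefl (hN : N.IsNetworkOn X) (v : N.V) : ¬ N.arc v v :=
  fun h => hN.acyclic v (.single h)

theorem degrees_of_arc (hN : N.IsNetworkOn X) (h : N.arc u v) (w : N.V) :
    (N.inDeg w = 0 ∧ N.outDeg w = 2) ∨ (N.inDeg w = 1 ∧ N.outDeg w = 0) ∨
      (N.inDeg w = 1 ∧ N.outDeg w = 2) ∨ (N.inDeg w = 2 ∧ N.outDeg w = 1) := by
  refine hN.degrees.resolve_left (fun ⟨_, _⟩ => hN.irrefl u ?_) w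
  rwa [Subsingleton.elim v u] at h

theorem inDeg_eq_one_of_isLeaf (hN : N.IsNetworkOn X) (h : N.arc u v) (hv : N.IsLeaf v) :
    N.inDeg v = 1 := by
  have : N.outDeg v = 0 := hv
  rcases hN.degrees_of_arc h v with h | h | h | h <;> omega

theorem outDeg_eq_one_of_isRet (hN : N.IsNetworkOn X) (hv : N.IsRet v) : N.outDeg v = 1 := by
  have hv : N.inDeg v = 2 := hv
  obtain ⟨u, hu⟩ := Set.nonempty_of_ncard_ne_zero (s := {u | N.arc u v})
    (by rw [← inDeg, hv]; simp)
  rcases hN.degrees_of_arc hu v with h | h | h | h <;> omega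

theorem outDeg_eq_two_of_arc (hN : N.IsNetworkOn X) (hp : N.arc v p) (hq : N.arc v q)
    (hpq : p ≠ q) : N.outDeg v = 2 := by
  have := hN.finiteV
  rcases hN.degrees_of_arc hp v with ⟨-, h⟩ | ⟨-, h⟩ | ⟨-, h⟩ | ⟨-, h⟩
  · exact h
  · exact absurd hp (IsLeaf.not_arc h)
  · exact h
  · exact absurd ((arc_iff_of_outDeg_eq_one h hp).mp hq).symm hpq

theorem exists_arc_iff_of_not_reflTransGen (hN : N.IsNetworkOn X) (hv : N.outDeg v = 2)
    {w : N.V} (hw : ¬ Relation.ReflTransGen N.arc v w) : ∃ g, ∀ u, N.arc u v ↔ u = g := by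
  have := hN.finiteV
  obtain ⟨p, hp⟩ := Set.nonempty_of_ncard_ne_zero (s := {u | N.arc v u})
    (by rw [← outDeg, hv]; simp)
  obtain ⟨r, hr⟩ := hN.rooted
  rcases hN.degrees_of_arc hp v with ⟨h, -⟩ | ⟨-, h⟩ | ⟨h, -⟩ | ⟨-, h⟩
  · exact absurd (hr.eq_of_inDeg_eq_zero h ▸ hr.2 w) hw
  · omega
  · obtain ⟨g, hg⟩ := Set.ncard_eq_one.mp h
    exact ⟨g, Set.ext_iff.mp hg⟩
  · omega

end IsNetworkOn

section Reroute

variable {β : Type*} [DecidableEq β] {p q p' q' : β} {s : Set β}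

def reroute (p q p' q' : β) (v : β) : β := if v = p then p' else if v = q then q' else v

theorem reroute_left : reroute p q p' q' p = p' := if_pos rfl

theorem reroute_right (h : q ≠ p) : reroute p q p' q' q = q' := by simp [reroute, h]

theorem reroute_of_ne {v : β} (hp : v ≠ p) (hq : v ≠ q) : reroute p q p' q' v = v := by
  simp [reroute, hp, hq]

theorem injOn_reroute_of_notMem (hpq' : p' ≠ q') (hp' : p' ∉ s) (hq' : q' ∉ s) :
    Set.InjOn (reroute p q p' q') s := by
  intro x hx y hy
  unfold reroute
  split_ifs <;> grind

theorem injOn_reroute_of_subsingleton (hp : p ∈ s → s.Subsingleton)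
    (hq : q ∈ s → s.Subsingleton) : Set.InjOn (reroute p q p' q') s := by
  intro x hx y hy
  unfold reroute
  split_ifs <;> grind [Set.Subsingleton]

end Reroute

theorem eq_or_eq_of_reflTransGen_retCherry {la lb pa pb v : N.V} (hla : ∀ u, ¬ N.arc la u)
    (hlb : ∀ u, ¬ N.arc lb u) (hpa : ∀ u, N.arc pa u ↔ u = la ∨ u = pb)
    (hpb : ∀ u, N.arc pb u ↔ u = lb) (h : Relation.ReflTransGen N.arc pa v) :
    v = pa ∨ v = la ∨ v = pb ∨ v = lb := by
  refine h.mem_of_closed (s := {pa, la, pb, lb}) ?_ (by simp)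
  simp only [Set.mem_insert_iff, Set.mem_singleton_iff]
  grind

/-- `lx` is the leaf `x`, `px` its parent and `gx` the parent of `px`. -/
structure DoubleRetCherryNbhd (N : PhyloNet α) (la lb lc pa pb pc ga gc : N.V) : Prop where
  children_pa : ∀ u, N.arc pa u ↔ u = la ∨ u = pb
  children_pc : ∀ u, N.arc pc u ↔ u = lc ∨ u = pb
  children_pb : ∀ u, N.arc pb u ↔ u = lb
  parents_la : ∀ u, N.arc u la ↔ u = pa
  parents_lc : ∀ u, N.arc u lc ↔ u = pc
  parents_lb : ∀ u, N.arc u lb ↔ u = pb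
  parents_pa : ∀ u, N.arc u pa ↔ u = ga
  parents_pc : ∀ u, N.arc u pc ↔ u = gc
  parents_pb : ∀ u, N.arc u pb ↔ u = pa ∨ u = pc
  not_arc_la : ∀ u, ¬ N.arc la u
  not_arc_lc : ∀ u, ¬ N.arc lc u
  not_arc_lb : ∀ u, ¬ N.arc lb u
  la_ne_lc : la ≠ lc

theorem IsNetworkOn.exists_doubleRetCherryNbhd {X : Finset α} (hN : N.IsNetworkOn X)
    {la lb lc pa pb pc : N.V} (hla : N.IsLeaf la) (hlb : N.IsLeaf lb) (hlc : N.IsLeaf lc)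
    (hlalc : la ≠ lc) (hpa : N.arc pa la) (hpb : N.arc pb lb) (hpc : N.arc pc lc)
    (hret : N.IsRet pb) (hpapb : N.arc pa pb) (hpcpb : N.arc pc pb) :
    ∃ ga gc, N.DoubleRetCherryNbhd la lb lc pa pb pc ga gc := by
  have := hN.finiteV
  have parents_leaf {p l : N.V} (h : N.arc p l) (hl : N.IsLeaf l) (u : N.V) :
      N.arc u l ↔ u = p :=
    arc_iff_of_inDeg_eq_one (hN.inDeg_eq_one_of_isLeaf h hl) h
  have leaf_ne {l v w : N.V} (hl : N.IsLeaf l) (h : N.arc v w) : l ≠ v :=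
    fun e => hl.not_arc (e ▸ h)
  have children_parent {p l : N.V} (h : N.arc p l) (hl : N.IsLeaf l) (h' : N.arc p pb)
      (u : N.V) : N.arc p u ↔ u = l ∨ u = pb :=
    arc_iff_of_outDeg_eq_two (hN.outDeg_eq_two_of_arc h h' (leaf_ne hl hpb)) h h'
      (leaf_ne hl hpb)
  have children_pb (u : N.V) : N.arc pb u ↔ u = lb :=
    arc_iff_of_outDeg_eq_one (hN.outDeg_eq_one_of_isRet hret) hpb
  have hpapc : pa ≠ pc := by
    rintro rfl
    rcases (children_parent hpa hla hpapb lc).mp hpc with h | h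
    exacts [hlalc h.symm, leaf_ne hlc hpb h]
  have not_reach {p l p' l' : N.V} (hp : N.arc p l) (hl : N.IsLeaf l) (hpp : N.arc p pb)
      (hp' : N.arc p' l') (hl' : N.IsLeaf l') (hpp' : N.arc p' pb) (hne : p ≠ p') :
      ¬ Relation.ReflTransGen N.arc p p' := fun h => by
    rcases eq_or_eq_of_reflTransGen_retCherry (fun _ => hl.not_arc) (fun _ => hlb.not_arc)
      (children_parent hp hl hpp) children_pb h with h | h | h | h
    exacts [hne h.symm, leaf_ne hl hp' h.symm, hN.irrefl _ (h ▸ hpp'), leaf_ne hlb hp' h.symm]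
  obtain ⟨ga, parents_pa⟩ := hN.exists_arc_iff_of_not_reflTransGen
    (hN.outDeg_eq_two_of_arc hpa hpapb (leaf_ne hla hpb))
    (not_reach hpa hla hpapb hpc hlc hpcpb hpapc)
  obtain ⟨gc, parents_pc⟩ := hN.exists_arc_iff_of_not_reflTransGen
    (hN.outDeg_eq_two_of_arc hpc hpcpb (leaf_ne hlc hpb))
    (not_reach hpc hlc hpcpb hpa hla hpapb hpapc.symm)
  exact ⟨ga, gc, children_parent hpa hla hpapb, children_parent hpc hlc hpcpb, children_pb,
    parents_leaf hpa hla, parents_leaf hpc hlc, parents_leaf hpb hlb, parents_pa, parents_pc,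
    fun _ => arc_iff_of_inDeg_eq_two hret hpapb hpcpb hpapc, fun _ => hla.not_arc,
    fun _ => hlc.not_arc, fun _ => hlb.not_arc, hlalc⟩

namespace DoubleRetCherryNbhd

variable {la lb lc pa pb pc ga gc u v : N.V}

theorem arc_pa_la (D : N.DoubleRetCherryNbhd la lb lc pa pb pc ga gc) :
    N.arc pa la :=
  (D.parents_la pa).mpr rfl

theorem arc_pc_lc (D : N.DoubleRetCherryNbhd la lb lc pa pb pc ga gc) :
    N.arc pc lc :=
  (D.parents_lc pc).mpr rfl

theorem arc_pb_lb (D : N.DoubleRetCherryNbhd la lb lc pa pb pc ga gc) :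
    N.arc pb lb :=
  (D.parents_lb pb).mpr rfl

theorem arc_ga_pa (D : N.DoubleRetCherryNbhd la lb lc pa pb pc ga gc) :
    N.arc ga pa :=
  (D.parents_pa ga).mpr rfl

theorem arc_gc_pc (D : N.DoubleRetCherryNbhd la lb lc pa pb pc ga gc) :
    N.arc gc pc :=
  (D.parents_pc gc).mpr rfl

theorem arc_pa_pb (D : N.DoubleRetCherryNbhd la lb lc pa pb pc ga gc) :
    N.arc pa pb :=
  (D.parents_pb pa).mpr (.inl rfl)

theorem arc_pc_pb (D : N.DoubleRetCherryNbhd la lb lc pa pb pc ga gc) :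
    N.arc pc pb :=
  (D.parents_pb pc).mpr (.inr rfl)

theorem arc_arc_pa_iff (D : N.DoubleRetCherryNbhd la lb lc pa pb pc ga gc)
    (hv : v ≠ pb) : N.arc u pa ∧ N.arc pa v ↔ u = ga ∧ v = la := by
  rw [D.parents_pa, D.children_pa]
  tauto

theorem arc_arc_pc_iff (D : N.DoubleRetCherryNbhd la lb lc pa pb pc ga gc)
    (hv : v ≠ pb) : N.arc u pc ∧ N.arc pc v ↔ u = gc ∧ v = lc := by
  rw [D.parents_pc, D.children_pc]
  tauto

theorem pa_ne_pc (D : N.DoubleRetCherryNbhd la lb lc pa pb pc ga gc) : pa ≠ pc := by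
  grind [D.arc_pa_la, D.arc_pb_lb, D.children_pc, D.not_arc_la, D.la_ne_lc]

theorem disjoint (D : N.DoubleRetCherryNbhd la lb lc pa pb pc ga gc) :
    Disjoint ({la, lc, ga, gc} : Set N.V) {pa, pb, pc, lb} := by
  simp only [Set.disjoint_insert_left, Set.disjoint_singleton_left, Set.mem_insert_iff,
    Set.mem_singleton_iff, not_or]
  and_intros <;> grind [D.arc_pa_la, D.arc_pb_lb, D.arc_pc_lc, D.arc_ga_pa, D.arc_gc_pc,
    D.arc_pa_pb, D.arc_pc_pb, D.children_pa, D.children_pb, D.children_pc, D.parents_lb,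
    D.not_arc_la, D.not_arc_lb, D.not_arc_lc]

end DoubleRetCherryNbhd

/-- The data of `DelDoubleRetCherry`, with the two-arc paths through the suppressed vertices
`pa`, `pc` already identified as `ga → pa → la` and `gc → pc → lc`. -/
structure DoubleRetCherryDeletion (N N' : PhyloNet α) (j : N'.V → N.V)
    (la lb lc pa pb pc ga gc : N.V) : Prop
    extends N.DoubleRetCherryNbhd la lb lc pa pb pc ga gc where
  injective : Function.Injective j
  exists_eq : ∀ v, v ∉ ({pa, pb, pc, lb} : Set N.V) → ∃ w, j w = v
  notMem : ∀ w, j w ∉ ({pa, pb, pc, lb} : Set N.V)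
  arc_iff : ∀ u v, N'.arc u v ↔
    N.arc (j u) (j v) ∨ (j u = ga ∧ j v = la) ∨ (j u = gc ∧ j v = lc)

namespace DoubleRetCherryDeletion

variable {j : N'.V → N.V} {la lb lc pa pb pc ga gc : N.V}

theorem apply_ne (D : N.DoubleRetCherryDeletion N' j la lb lc pa pb pc ga gc)
    (w : N'.V) : j w ≠ pa ∧ j w ≠ pb ∧ j w ≠ pc ∧ j w ≠ lb := by
  simpa [not_or] using D.notMem w

theorem mem_range (D : N.DoubleRetCherryDeletion N' j la lb lc pa pb pc ga gc)
    {v : N.V} (hv : v ∈ ({la, lc, ga, gc} : Set N.V)) : v ∈ Set.range j :=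
  D.exists_eq v (D.disjoint.notMem_of_mem_left hv)

theorem child_ne (D : N.DoubleRetCherryDeletion N' j la lb lc pa pb pc ga gc)
    {w : N'.V} {x : N.V} (hx : N.arc (j w) x) :
    x ≠ la ∧ x ≠ lc ∧ x ≠ pb ∧ x ≠ lb := by
  obtain ⟨hpa, hpb, hpc, -⟩ := D.apply_ne w
  refine ⟨?_, ?_, ?_, ?_⟩ <;> rintro rfl
  · exact hpa ((D.parents_la _).mp hx)
  · exact hpc ((D.parents_lc _).mp hx)
  · rcases (D.parents_pb _).mp hx with h | h
    exacts [hpa h, hpc h]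
  · exact hpb ((D.parents_lb _).mp hx)

theorem parent_ne (D : N.DoubleRetCherryDeletion N' j la lb lc pa pb pc ga gc)
    {w : N'.V} {x : N.V} (hx : N.arc x (j w)) : x ≠ pb ∧ x ≠ lb := by
  refine ⟨?_, ?_⟩ <;> rintro rfl
  · exact (D.apply_ne w).2.2.2 ((D.children_pb _).mp hx)
  · exact D.not_arc_lb _ hx

theorem reroute_mem_range (D : N.DoubleRetCherryDeletion N' j la lb lc pa pb pc ga gc)
    [DecidableEq N.V] {p' q' x : N.V} (hp' : p' ∈ Set.range j)
    (hq' : q' ∈ Set.range j) (hxpb : x ≠ pb) (hxlb : x ≠ lb) :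
    reroute pa pc p' q' x ∈ Set.range j := by
  by_cases h1 : x = pa
  · rwa [h1, reroute_left]
  by_cases h2 : x = pc
  · rwa [h2, reroute_right D.pa_ne_pc.symm]
  · rw [reroute_of_ne h1 h2]
    exact D.exists_eq x (by simp [h1, h2, hxpb, hxlb])

theorem reroute_mem_range_of_arc [DecidableEq N.V]
    (D : N.DoubleRetCherryDeletion N' j la lb lc pa pb pc ga gc) {w : N'.V} {x : N.V}
    (hx : N.arc (j w) x) : reroute pa pc la lc x ∈ Set.range j :=
  D.reroute_mem_range (D.mem_range (by simp)) (D.mem_range (by simp)) (D.child_ne hx).2.2.1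
    (D.child_ne hx).2.2.2

theorem arc_iff_exists_child (D : N.DoubleRetCherryDeletion N' j la lb lc pa pb pc ga gc)
    [DecidableEq N.V] (w v : N'.V) :
    N'.arc w v ↔ ∃ x, N.arc (j w) x ∧ reroute pa pc la lc x = j v := by
  have hpapc : pc ≠ pa := D.pa_ne_pc.symm
  rw [D.arc_iff]
  constructor
  · rintro (h | ⟨hw, hv⟩ | ⟨hw, hv⟩)
    · exact ⟨j v, h, reroute_of_ne (D.apply_ne v).1 (D.apply_ne v).2.2.1⟩
    · exact ⟨pa, hw ▸ D.arc_ga_pa, hv ▸ reroute_left⟩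
    · exact ⟨pc, hw ▸ D.arc_gc_pc, hv ▸ reroute_right hpapc⟩
  · rintro ⟨x, hx, hxv⟩
    by_cases h1 : x = pa
    · subst h1
      exact .inr (.inl ⟨(D.parents_pa _).mp hx, hxv.symm.trans reroute_left⟩)
    by_cases h2 : x = pc
    · subst h2
      exact .inr (.inr ⟨(D.parents_pc _).mp hx, hxv.symm.trans (reroute_right hpapc)⟩)
    · rw [reroute_of_ne h1 h2] at hxv
      exact .inl (hxv ▸ hx)

theorem arc_iff_exists_parent (D : N.DoubleRetCherryDeletion N' j la lb lc pa pb pc ga gc)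
    [DecidableEq N.V] (v w : N'.V) :
    N'.arc v w ↔ ∃ x, N.arc x (j w) ∧ reroute pa pc ga gc x = j v := by
  have hpapc : pc ≠ pa := D.pa_ne_pc.symm
  have hpb := (D.apply_ne w).2.1
  rw [D.arc_iff]
  constructor
  · rintro (h | ⟨hv, hw⟩ | ⟨hv, hw⟩)
    · exact ⟨j v, h, reroute_of_ne (D.apply_ne v).1 (D.apply_ne v).2.2.1⟩
    · exact ⟨pa, hw ▸ D.arc_pa_la, hv ▸ reroute_left⟩
    · exact ⟨pc, hw ▸ D.arc_pc_lc, hv ▸ reroute_right hpapc⟩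
  · rintro ⟨x, hx, hxv⟩
    by_cases h1 : x = pa
    · subst h1
      exact .inr (.inl ⟨hxv.symm.trans reroute_left,
        ((D.children_pa _).mp hx).resolve_right hpb⟩)
    by_cases h2 : x = pc
    · subst h2
      exact .inr (.inr ⟨hxv.symm.trans (reroute_right hpapc),
        ((D.children_pc _).mp hx).resolve_right hpb⟩)
    · rw [reroute_of_ne h1 h2] at hxv
      exact .inl (hxv ▸ hx)

theorem outDeg_eq (D : N.DoubleRetCherryDeletion N' j la lb lc pa pb pc ga gc)
    (w : N'.V) : N'.outDeg w = N.outDeg (j w) := by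
  classical
  have hset : {v | N'.arc w v} = j ⁻¹' (reroute pa pc la lc '' {x | N.arc (j w) x}) :=
    Set.ext (D.arc_iff_exists_child w)
  have hinj : Set.InjOn (reroute pa pc la lc) {x | N.arc (j w) x} :=
    injOn_reroute_of_notMem D.la_ne_lc (fun hx => (D.child_ne hx).1 rfl)
      (fun hx => (D.child_ne hx).2.1 rfl)
  have hrange : reroute pa pc la lc '' {x | N.arc (j w) x} ⊆ Set.range j := by
    rintro _ ⟨x, hx, rfl⟩
    exact D.reroute_mem_range_of_arc hx
  rw [outDeg, outDeg, hset, Set.ncard_preimage_of_injective_subset_range D.injective hrange,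
    hinj.ncard_image]

theorem inDeg_eq (D : N.DoubleRetCherryDeletion N' j la lb lc pa pb pc ga gc)
    (w : N'.V) : N'.inDeg w = N.inDeg (j w) := by
  classical
  have hset : {v | N'.arc v w} = j ⁻¹' (reroute pa pc ga gc '' {x | N.arc x (j w)}) :=
    Set.ext fun v => D.arc_iff_exists_parent v w
  have hsub {p l : N.V} (hl : ∀ u, N.arc u l ↔ u = p) (hw : j w = l) :
      {x | N.arc x (j w)}.Subsingleton := by
    rw [hw]
    exact fun x hx y hy => ((hl x).mp hx).trans ((hl y).mp hy).symm
  have hinj : Set.InjOn (reroute pa pc ga gc) {x | N.arc x (j w)} :=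
    injOn_reroute_of_subsingleton
      (fun hx => hsub D.parents_la (((D.children_pa _).mp hx).resolve_right (D.apply_ne w).2.1))
      (fun hx => hsub D.parents_lc (((D.children_pc _).mp hx).resolve_right (D.apply_ne w).2.1))
  have hrange : reroute pa pc ga gc '' {x | N.arc x (j w)} ⊆ Set.range j := by
    rintro _ ⟨x, hx, rfl⟩
    exact D.reroute_mem_range (D.mem_range (by simp)) (D.mem_range (by simp))
      (D.parent_ne hx).1 (D.parent_ne hx).2
  rw [inDeg, inDeg, hset, Set.ncard_preimage_of_injective_subset_range D.injective hrange,
    hinj.ncard_image]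

theorem isLeaf_iff (D : N.DoubleRetCherryDeletion N' j la lb lc pa pb pc ga gc)
    (w : N'.V) : N'.IsLeaf w ↔ N.IsLeaf (j w) := by
  rw [IsLeaf, IsLeaf, D.outDeg_eq]

theorem isRet_iff (D : N.DoubleRetCherryDeletion N' j la lb lc pa pb pc ga gc)
    (w : N'.V) : N'.IsRet w ↔ N.IsRet (j w) := by
  rw [IsRet, IsRet, D.inDeg_eq]

theorem transGen_of_arc (D : N.DoubleRetCherryDeletion N' j la lb lc pa pb pc ga gc)
    {u v : N'.V} (h : N'.arc u v) : Relation.TransGen N.arc (j u) (j v) := by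
  rcases (D.arc_iff u v).mp h with h | ⟨hu, hv⟩ | ⟨hu, hv⟩
  · exact .single h
  · rw [hu, hv]; exact .tail (.single D.arc_ga_pa) D.arc_pa_la
  · rw [hu, hv]; exact .tail (.single D.arc_gc_pc) D.arc_pc_lc

theorem transGen_avoid_of_arc (D : N.DoubleRetCherryDeletion N' j la lb lc pa pb pc ga gc)
    {u v p q : N'.V} (h : N'.arc p q) (hne : ¬(p = u ∧ q = v)) :
    Relation.TransGen (fun x y => N.arc x y ∧ ¬(x = j u ∧ y = j v)) (j p) (j q) := by
  rcases (D.arc_iff p q).mp h with h | ⟨hp, hq⟩ | ⟨hp, hq⟩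
  · exact .single ⟨h, fun ⟨e1, e2⟩ => hne ⟨D.injective e1, D.injective e2⟩⟩
  · rw [hp, hq]
    exact .tail (.single ⟨D.arc_ga_pa, fun ⟨_, e⟩ => (D.apply_ne v).1 e.symm⟩)
      ⟨D.arc_pa_la, fun ⟨e, _⟩ => (D.apply_ne u).1 e.symm⟩
  · rw [hp, hq]
    exact .tail (.single ⟨D.arc_gc_pc, fun ⟨_, e⟩ => (D.apply_ne v).2.2.1 e.symm⟩)
      ⟨D.arc_pc_lc, fun ⟨e, _⟩ => (D.apply_ne u).2.2.1 e.symm⟩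

theorem reflTransGen_of_reflTransGen (D : N.DoubleRetCherryDeletion N' j la lb lc pa pb pc ga gc)
    {w₀ w : N'.V}
    (h : Relation.ReflTransGen N.arc (j w₀) (j w)) : Relation.ReflTransGen N'.arc w₀ w := by
  classical
  suffices key : ∀ v, Relation.ReflTransGen N.arc (j w₀) v → v ≠ pb → v ≠ lb →
      ∃ w, j w = reroute pa pc la lc v ∧ Relation.ReflTransGen N'.arc w₀ w by
    obtain ⟨hpa, hpb, hpc, hlb⟩ := D.apply_ne w
    obtain ⟨w', hw', hr⟩ := key _ h hpb hlb
    rwa [D.injective (hw'.trans (reroute_of_ne hpa hpc))] at hr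
  intro v hv
  induction hv with
  | refl =>
    exact fun _ _ => ⟨w₀, (reroute_of_ne (D.apply_ne w₀).1 (D.apply_ne w₀).2.2.1).symm, .refl⟩
  | @tail x y _ hxy ih =>
    intro hypb hylb
    obtain ⟨w, hw, hr⟩ := ih (fun h => hylb ((D.children_pb y).mp (h ▸ hxy)))
      (fun h => D.not_arc_lb y (h ▸ hxy))
    have hne {l : N.V} (hl : l ∈ ({la, lc} : Set N.V)) : l ≠ pa ∧ l ≠ pc :=
      ⟨D.disjoint.ne_of_mem (by grind) (by simp), D.disjoint.ne_of_mem (by grind) (by simp)⟩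
    by_cases h1 : x = pa
    · subst h1
      refine ⟨w, ?_, hr⟩
      rw [hw, ((D.children_pa y).mp hxy).resolve_right hypb, reroute_left,
        reroute_of_ne (hne (by simp)).1 (hne (by simp)).2]
    by_cases h2 : x = pc
    · subst h2
      refine ⟨w, ?_, hr⟩
      rw [hw, ((D.children_pc y).mp hxy).resolve_right hypb, reroute_right D.pa_ne_pc.symm,
        reroute_of_ne (hne (by simp)).1 (hne (by simp)).2]
    · rw [reroute_of_ne h1 h2] at hw
      obtain ⟨w', hw'⟩ := D.reroute_mem_range_of_arc (hw ▸ hxy)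
      exact ⟨w', hw', hr.tail ((D.arc_iff_exists_child w w').mpr ⟨y, hw ▸ hxy, hw'.symm⟩)⟩

theorem isNetworkOn {X : Finset α} {b : α} [DecidableEq α]
    (D : N.DoubleRetCherryDeletion N' j la (N.leafMap b) lc pa pb pc ga gc)
    (hN : N.IsNetworkOn X) (hleaf : ∀ x ∈ X, x ≠ b → j (N'.leafMap x) = N.leafMap x) :
    N'.IsNetworkOn (X.erase b) := by
  have := hN.finiteV
  obtain ⟨r, hr⟩ := hN.rooted
  obtain ⟨wr, rfl⟩ := D.exists_eq r (by
    simp [hr.ne_of_arc D.arc_ga_pa, hr.ne_of_arc D.arc_pa_pb, hr.ne_of_arc D.arc_gc_pc,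
      hr.ne_of_arc D.arc_pb_lb])
  obtain ⟨a, ha, rfl⟩ := hN.leaf_surj la (isLeaf_of_forall_not_arc D.not_arc_la)
  have hab : a ≠ b := fun h => D.disjoint.ne_of_mem (by simp) (by simp) (congrArg N.leafMap h)
  refine
    { nonemptyX := ⟨a, Finset.mem_erase.mpr ⟨hab, ha⟩⟩
      finiteV := Finite.of_injective j D.injective
      acyclic := fun w hw => hN.acyclic (j w) (hw.lift' j fun _ _ => D.transGen_of_arc)
      rooted := ⟨wr, by
        rw [IsRoot, D.inDeg_eq]
        exact ⟨hr.1, fun w => D.reflTransGen_of_reflTransGen (hr.2 _)⟩⟩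
      leaf_isLeaf := fun x hx => ?_
      leaf_inj := fun x hx y hy hxy => ?_
      leaf_surj := fun w hw => ?_
      degrees := .inr fun w => by
        rw [D.inDeg_eq, D.outDeg_eq]
        exact hN.degrees_of_arc D.arc_pa_pb (j w) }
  · obtain ⟨hxb, hx⟩ := Finset.mem_erase.mp hx
    rw [D.isLeaf_iff, hleaf x hx hxb]
    exact hN.leaf_isLeaf x hx
  · obtain ⟨hxb, hx⟩ := Finset.mem_erase.mp hx
    obtain ⟨hyb, hy⟩ := Finset.mem_erase.mp hy
    exact hN.leaf_inj x hx y hy (by rw [← hleaf x hx hxb, ← hleaf y hy hyb, hxy])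
  · obtain ⟨x, hx, hxw⟩ := hN.leaf_surj (j w) ((D.isLeaf_iff w).mp hw)
    have hxb : x ≠ b := by
      rintro rfl
      exact (D.apply_ne w).2.2.2 hxw.symm
    exact ⟨x, Finset.mem_erase.mpr ⟨hxb, hx⟩, D.injective (by rw [hleaf x hx hxb, hxw])⟩

theorem treeChild (D : N.DoubleRetCherryDeletion N' j la lb lc pa pb pc ga gc)
    (h : N.TreeChild) : N'.TreeChild := by
  classical
  intro w hw
  obtain ⟨z, hz, hzr⟩ := h (j w) (by rwa [← D.isLeaf_iff])
  obtain ⟨w', hw'⟩ := D.reroute_mem_range_of_arc hz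
  refine ⟨w', (D.arc_iff_exists_child w w').mpr ⟨z, hz, hw'.symm⟩, ?_⟩
  rw [D.isRet_iff, hw']
  by_cases h1 : z = pa
  · rw [h1, reroute_left]
    exact not_isRet_of_arc_iff D.parents_la
  by_cases h2 : z = pc
  · rw [h2, reroute_right D.pa_ne_pc.symm]
    exact not_isRet_of_arc_iff D.parents_lc
  · rwa [reroute_of_ne h1 h2]

theorem not_shortcut (D : N.DoubleRetCherryDeletion N' j la lb lc pa pb pc ga gc)
    (h : ∀ u v : N.V, ¬ N.Shortcut u v) (u v : N'.V) : ¬ N'.Shortcut u v := by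
  rintro ⟨huv, hret, hpath⟩
  rw [D.isRet_iff] at hret
  rcases (D.arc_iff u v).mp huv with huv | ⟨-, hv⟩ | ⟨-, hv⟩
  · exact h (j u) (j v)
      ⟨huv, hret, hpath.lift' j fun _ _ ⟨hpq, hne⟩ => D.transGen_avoid_of_arc hpq hne⟩
  · exact not_isRet_of_arc_iff D.parents_la (hv ▸ hret)
  · exact not_isRet_of_arc_iff D.parents_lc (hv ▸ hret)

theorem temporal (D : N.DoubleRetCherryDeletion N' j la lb lc pa pb pc ga gc)
    (h : N.Temporal) : N'.Temporal := by
  obtain ⟨t, hpos, ht⟩ := h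
  refine ⟨t ∘ j, fun w => hpos _, fun u v huv => ?_⟩
  simp only [Function.comp_apply, D.isRet_iff]
  have hla := not_isRet_of_arc_iff D.parents_la
  have hlc := not_isRet_of_arc_iff D.parents_lc
  rcases (D.arc_iff u v).mp huv with huv | ⟨hu, hv⟩ | ⟨hu, hv⟩
  · exact ht _ _ huv
  · rw [hu, hv]
    exact ⟨fun h => absurd h hla, fun _ => ((ht _ _ D.arc_ga_pa).2
      (not_isRet_of_arc_iff D.parents_pa)).trans ((ht _ _ D.arc_pa_la).2 hla)⟩
  · rw [hu, hv]
    exact ⟨fun h => absurd h hlc, fun _ => ((ht _ _ D.arc_gc_pc).2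
      (not_isRet_of_arc_iff D.parents_pc)).trans ((ht _ _ D.arc_pc_lc).2 hlc)⟩

end DoubleRetCherryDeletion

end PhyloNet

open PhyloNet in
/-- Deleting the reticulation leaf `b` of a double-reticulated
cherry of a temporal normal network yields a temporal normal network on `X − {b}`. -/
theorem del_doubleRetCherry_temporal_normal {α : Type} [DecidableEq α] (X : Finset α)
    (N N' : PhyloNet α) (hN : N.IsNetworkOn X) (hnorm : N.Normal)
    (htemp : N.Temporal)
    (a b c : α) (ha : a ∈ X) (hb : b ∈ X) (hc : c ∈ X)
    (hdrc : N.DoubleRetCherry a b c)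
    (hdel : N.DelDoubleRetCherry N' X a b c) :
    N'.IsNetworkOn (X.erase b) ∧ N'.Normal ∧ N'.Temporal := by
  obtain ⟨-, -, hac, -⟩ := hdrc
  obtain ⟨pa, pb, pc, j, hpa, hpb, hpc, hret, hpapb, hpcpb, hj, hleaf, hsurj, hnotMem, harc⟩ :=
    hdel
  obtain ⟨ga, gc, hnbhd⟩ := hN.exists_doubleRetCherryNbhd (hN.leaf_isLeaf a ha)
    (hN.leaf_isLeaf b hb) (hN.leaf_isLeaf c hc) (fun h => hac (hN.leaf_inj a ha c hc h))
    hpa hpb hpc hret hpapb hpcpb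
  have D : N.DoubleRetCherryDeletion N' j _ _ _ pa pb pc ga gc :=
    { hnbhd with
      injective := hj
      exists_eq := hsurj
      notMem := hnotMem
      arc_iff := fun u v => by
        have hv : j v ≠ pb := fun h => hnotMem v (by simp [h])
        rw [harc, hnbhd.arc_arc_pa_iff hv, hnbhd.arc_arc_pc_iff hv] }
  exact ⟨D.isNetworkOn hN hleaf, ⟨D.treeChild hnorm.1, D.not_shortcut hnorm.2⟩,
    D.temporal htemp⟩
end

section
/- Let N be a normal network on X, and let u and u' be distinct vertices of N with equal visibility sets, i.e., V_u = V_{u'}. Then there is a directed path in N from u to u' or a directed path from u' to u; moreover, exactly one of these two alternatives holds. -/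
/-!
In a tree-child network every vertex `u` reaches a leaf `x` along arcs into vertices of
in-degree one; no root-to-`x` path can enter that stretch except through `u`, so `x` is
visible from `u`. If `V_u = V_{u'}`, then `x` is visible from `u'` as well, so the path
root → `u` → `x` passes through `u'`, which puts `u'` above or below `u`. Acyclicity
excludes both at once.
-/

open Relation

theorem Relation.ReflTransGen.avoiding_or_through {β : Type*} {r : β → β → Prop} (v : β)
    {a b : β} (h : ReflTransGen r a b) :
    ReflTransGen (fun p q => r p q ∧ p ≠ v ∧ q ≠ v) a b ∨
      (ReflTransGen r a v ∧ ReflTransGen r v b) := by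
  induction h with
  | refl => exact Or.inl .refl
  | @tail c b _ hcb ih =>
    rcases ih with havoid | ⟨hav, hvc⟩
    · have hac : ReflTransGen r a c := ReflTransGen.mono (fun _ _ h => h.1) _ _ havoid
      by_cases hc : c = v
      · subst hc
        exact Or.inr ⟨hac, .single hcb⟩
      by_cases hb : b = v
      · subst hb
        exact Or.inr ⟨hac.tail hcb, .refl⟩
      exact Or.inl (havoid.tail ⟨hcb, hc, hb⟩)
    · exact Or.inr ⟨hav, hvc.tail hcb⟩

namespace PhyloNet

variable {α : Type} {X : Finset α} {N : PhyloNet α}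

theorem IsNetworkOn.wellFounded_transGen_flip (hN : N.IsNetworkOn X) :
    WellFounded (fun a b => TransGen N.arc b a) :=
  have : Finite N.V := hN.finiteV
  have : IsTrans N.V (fun a b => TransGen N.arc b a) := ⟨fun _ _ _ h₁ h₂ => h₂.trans h₁⟩
  have : Std.Irrefl (fun a b => TransGen N.arc b a) := ⟨hN.acyclic⟩
  Finite.wellFounded_of_trans_of_irrefl _

theorem IsNetworkOn.inDeg_eq_one_of_arc (hN : N.IsNetworkOn X) {v w : N.V}
    (hvw : N.arc v w) (hw : ¬ N.IsRet w) : N.inDeg w = 1 := by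
  rcases hN.degrees with ⟨_, hsub⟩ | hdeg
  · rw [Subsingleton.elim w v] at hvw
    exact absurd (.single hvw) (hN.acyclic v)
  rcases hdeg w with ⟨h0, _⟩ | ⟨h1, _⟩ | ⟨h1, _⟩ | ⟨h2, _⟩
  · have : Finite N.V := hN.finiteV
    exact absurd h0 (Set.ncard_ne_zero_of_mem (show v ∈ {u | N.arc u w} from hvw))
  · exact h1
  · exact h1
  · exact absurd h2 hw

theorem IsNetworkOn.exists_inDeg_one_path_to_leaf (hN : N.IsNetworkOn X) (htc : N.TreeChild)
    (v : N.V) :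
    ∃ x ∈ X, ReflTransGen (fun p q => N.arc p q ∧ N.inDeg q = 1) v (N.leafMap x) := by
  induction v using hN.wellFounded_transGen_flip.induction with
  | _ v ih =>
    by_cases hleaf : N.IsLeaf v
    · obtain ⟨x, hx, rfl⟩ := hN.leaf_surj v hleaf
      exact ⟨x, hx, .refl⟩
    obtain ⟨w, hvw, hw⟩ := htc v hleaf
    obtain ⟨x, hx, hwx⟩ := ih w (.single hvw)
    exact ⟨x, hx, .head ⟨hvw, hN.inDeg_eq_one_of_arc hvw hw⟩ hwx⟩

theorem eq_of_arc_of_inDeg_eq_one {p q w : N.V} (hw : N.inDeg w = 1)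
    (hp : N.arc p w) (hq : N.arc q w) : p = q := by
  obtain ⟨a, ha⟩ := Set.ncard_eq_one.mp hw
  have hpa : p ∈ {v | N.arc v w} := hp
  have hqa : q ∈ {v | N.arc v w} := hq
  rw [ha] at hpa hqa
  exact hpa.trans hqa.symm

theorem not_avoidReach_of_inDeg_one_path {u r w : N.V} (hr : N.IsRoot r)
    (hw : ReflTransGen (fun p q => N.arc p q ∧ N.inDeg q = 1) u w) :
    ¬ N.AvoidReach u r w := by
  induction hw with
  | refl => exact fun h => h.2.1 rfl
  | @tail b c _ hbc ih =>
    rintro ⟨hru, hcu, hrc⟩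
    rcases hrc.cases_tail with rfl | ⟨p, hrp, hpc, hpu, -⟩
    · exact absurd (hbc.2.symm.trans hr.1) one_ne_zero
    obtain rfl := eq_of_arc_of_inDeg_eq_one hbc.2 hpc hbc.1
    exact ih ⟨hru, hpu, hrp⟩

theorem mem_visSet_of_inDeg_one_path {u : N.V} {x : α} (hx : x ∈ X)
    (hp : ReflTransGen (fun p q => N.arc p q ∧ N.inDeg q = 1) u (N.leafMap x)) :
    x ∈ N.visSet X u :=
  ⟨hx, fun _ hr => not_avoidReach_of_inDeg_one_path hr hp⟩

theorem reflTransGen_or_of_mem_visSet {v w : N.V} {x : α} (hx : x ∈ N.visSet X v)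
    {r : N.V} (hr : N.IsRoot r) (hwx : ReflTransGen N.arc w (N.leafMap x)) :
    ReflTransGen N.arc w v ∨ ReflTransGen N.arc v w := by
  by_cases hrv : r = v
  · exact Or.inr (hrv ▸ hr.2 w)
  by_cases hxv : N.leafMap x = v
  · exact Or.inl (hxv ▸ hwx)
  rcases (hr.2 w).avoiding_or_through v with hrw | ⟨-, hvw⟩
  · rcases hwx.avoiding_or_through v with hwx' | ⟨hwv, -⟩
    · exact absurd ⟨hrv, hxv, hrw.trans hwx'⟩ (hx.2 r hr)
    · exact Or.inl hwv
  · exact Or.inr hvw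

end PhyloNet

open PhyloNet in
/-- In a normal network, two distinct vertices with equal
visibility sets are joined by a directed path, in exactly one direction. -/
theorem equal_visSet_comparable {α : Type} (X : Finset α) (N : PhyloNet α)
    (hN : N.IsNetworkOn X) (hnorm : N.Normal)
    (u u' : N.V) (huu : u ≠ u') (hvis : N.visSet X u = N.visSet X u') :
    (Relation.TransGen N.arc u u' ∨ Relation.TransGen N.arc u' u) ∧
    ¬ (Relation.TransGen N.arc u u' ∧ Relation.TransGen N.arc u' u) := by
  obtain ⟨x, hx, hux⟩ := hN.exists_inDeg_one_path_to_leaf hnorm.1 u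
  have hxu' : x ∈ N.visSet X u' := hvis ▸ mem_visSet_of_inDeg_one_path hx hux
  obtain ⟨r, hr⟩ := hN.rooted
  refine ⟨?_, fun ⟨h₁, h₂⟩ => hN.acyclic u (h₁.trans h₂)⟩
  have hux' : ReflTransGen N.arc u (N.leafMap x) := ReflTransGen.mono (fun _ _ h => h.1) _ _ hux
  rcases reflTransGen_or_of_mem_visSet hxu' hr hux' with h | h
  · exact Or.inl ((reflTransGen_iff_eq_or_transGen.mp h).resolve_left huu.symm)
  · exact Or.inr ((reflTransGen_iff_eq_or_transGen.mp h).resolve_left huu)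
end

section
/- Let N be a normal network on X, let W be a nonempty subset of X, and let U be the set of vertices u of N whose visibility set V_u equals W. Suppose U is nonempty. Then there is a directed path in N whose vertex set contains U; moreover, if u_1 and u_k denote, respectively, the first and last vertices of U along such a path, then every vertex on the subpath from u_1 to u_k belongs to U, and every vertex on this subpath except possibly u_1 is a tree vertex or a leaf. -/
/-! Say `u` dominates `v` if every root-to-`v` path passes through `u`; then `visSet X u` is the
set of leaves dominated by `u`, and visibility sets shrink along dominance. The tail of an arc into
a vertex of in-degree one dominates its head. Pick `u₁ ∈ U` with no proper ancestor in `U` and, by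
tree-child, follow a tree path from `u₁` to a leaf `z`; `u₁` dominates every vertex on it. So `z`
is dominated by every `u ∈ U`, and a root path to `u₁` continued along the tree path must meet `u`;
by the choice of `u₁`, `u` lies on the tree path. A vertex of the path lying before some `u ∈ U`
has its visibility set squeezed between `visSet X u = W` and `visSet X u₁ = W`, so `U` is an
initial segment of the path. -/

theorem List.mem_takeWhile_of_isChain {β : Type*} {p : β → Bool} {l : List β} {a : β}
    (hl : l.IsChain fun x y => p y → p x) (ha : a ∈ l) (hpa : p a) : a ∈ l.takeWhile p := by
  induction l with
  | nil => simp at ha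
  | cons b l ih =>
    have hpb : p b := hl.induction (fun x => p x → p b) _ (fun _ _ hxy h hy => h (hxy hy))
      (fun _ h => h) a ha hpa
    rw [List.takeWhile_cons_of_pos hpb]
    rcases List.mem_cons.mp ha with rfl | ha
    · exact List.mem_cons_self
    · exact List.mem_cons_of_mem _ (ih hl.tail ha)

theorem Relation.wellFounded_transGen_of_acyclic {V : Type*} [Finite V] {R : V → V → Prop}
    (h : ∀ v, ¬ Relation.TransGen R v v) : WellFounded (Relation.TransGen R) :=
  haveI : IsTrans V (Relation.TransGen R) := ⟨fun _ _ _ => Relation.TransGen.trans⟩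
  haveI : Std.Irrefl (Relation.TransGen R) := ⟨h⟩
  Finite.wellFounded_of_trans_of_irrefl _

namespace PhyloNet

variable {α : Type} {N : PhyloNet α}

def IsBinary (N : PhyloNet α) : Prop :=
  ∀ v : N.V,
    (N.inDeg v = 0 ∧ N.outDeg v = 2) ∨ (N.inDeg v = 1 ∧ N.outDeg v = 0) ∨
    (N.inDeg v = 1 ∧ N.outDeg v = 2) ∨ (N.inDeg v = 2 ∧ N.outDeg v = 1)

def Dominates (N : PhyloNet α) (u v : N.V) : Prop :=
  ∀ r : N.V, N.IsRoot r → ¬ N.AvoidReach u r v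

theorem eq_of_arc_of_arc_of_inDeg_eq_one {p q v : N.V} (hv : N.inDeg v = 1)
    (hp : N.arc p v) (hq : N.arc q v) : q = p := by
  obtain ⟨a, ha⟩ := Set.ncard_eq_one.mp hv
  have hp' : p ∈ ({a} : Set N.V) := ha ▸ hp
  have hq' : q ∈ ({a} : Set N.V) := ha ▸ hq
  exact hq'.trans hp'.symm

theorem IsBinary.isTreeVert_or_isLeaf_of_arc [Finite N.V] (hN : N.IsBinary) {p c : N.V}
    (hpc : N.arc p c) (hc : ¬ N.IsRet c) : N.IsTreeVert c ∨ N.IsLeaf c := by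
  have hin : 0 < N.inDeg c := (Set.ncard_pos (Set.toFinite _)).mpr ⟨p, hpc⟩
  unfold IsTreeVert IsLeaf
  unfold IsRet at hc
  rcases hN c with h | h | h | h <;> omega

theorem IsBinary.inDeg_eq_one {v : N.V} (hN : N.IsBinary) (hv : N.IsTreeVert v ∨ N.IsLeaf v) :
    N.inDeg v = 1 := by
  unfold IsTreeVert IsLeaf at hv
  rcases hN v with h | h | h | h <;> omega

theorem exists_treePath_to_leaf [Finite N.V]
    (hacyc : ∀ v : N.V, ¬ Relation.TransGen N.arc v v) (hTC : N.TreeChild) (hN : N.IsBinary)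
    (u : N.V) :
    ∃ (t : List N.V) (z : N.V), (u :: t).IsChain N.arc ∧ z ∈ u :: t ∧ N.IsLeaf z ∧
      ∀ w ∈ t, N.IsTreeVert w ∨ N.IsLeaf w := by
  have hwf : WellFounded (Relation.TransGen (flip N.arc)) :=
    Relation.wellFounded_transGen_of_acyclic fun v h => hacyc v (Relation.transGen_swap.mp h)
  induction u using hwf.induction with
  | _ v ih =>
    by_cases hv : N.IsLeaf v
    · exact ⟨[], v, List.isChain_singleton v, List.mem_cons_self, hv, by simp⟩
    obtain ⟨c, hvc, hc⟩ := hTC v hv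
    obtain ⟨t, z, ht, hz, hzleaf, htree⟩ := ih c (.single hvc)
    exact ⟨c :: t, z, ht.cons_cons hvc, List.mem_cons_of_mem _ hz, hzleaf,
      List.forall_mem_cons.mpr ⟨hN.isTreeVert_or_isLeaf_of_arc hvc hc, htree⟩⟩

theorem AvoidReach.tail {u a b c : N.V} (h : N.AvoidReach u a b) (hbc : N.arc b c)
    (hc : c ≠ u) : N.AvoidReach u a c :=
  ⟨h.1, hc, h.2.2.tail ⟨hbc, h.2.1, hc⟩⟩

/-- A path avoiding `u` either also avoids `v`, or its initial segment up to `v` avoids `u`. -/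
theorem AvoidReach.avoidReach_or_avoidReach {u a b : N.V} (h : N.AvoidReach u a b) (v : N.V) :
    N.AvoidReach v a b ∨ N.AvoidReach u a v := by
  obtain ⟨hau, hbu, hab⟩ := h
  induction hab with
  | refl =>
    by_cases hav : a = v
    · exact .inr (hav ▸ ⟨hau, hau, .refl⟩)
    · exact .inl ⟨hav, hav, .refl⟩
  | @tail c b hac hcb ih =>
    by_cases hbv : b = v
    · exact .inr (hbv ▸ ⟨hau, hbu, hac.tail hcb⟩)
    · exact (ih hcb.2.1).imp_left fun hv => hv.tail hcb.1 hbv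

theorem avoidReach_of_not_reflTransGen {r a u : N.V} (hra : Relation.ReflTransGen N.arc r a)
    (hua : ¬ Relation.ReflTransGen N.arc u a) : N.AvoidReach u r a := by
  induction hra with
  | refl => exact ⟨fun h => hua (h ▸ .refl), fun h => hua (h ▸ .refl), .refl⟩
  | @tail b c _ hbc ih =>
    exact (ih fun h => hua (h.tail hbc)).tail hbc fun h => hua (h ▸ .refl)

theorem Dominates.refl (u : N.V) : N.Dominates u u :=
  fun _ _ h => h.2.1 rfl

theorem Dominates.trans {u v w : N.V} (huv : N.Dominates u v) (hvw : N.Dominates v w) :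
    N.Dominates u w :=
  fun r hr h => (h.avoidReach_or_avoidReach v).elim (hvw r hr) (huv r hr)

theorem dominates_of_arc_of_inDeg_eq_one {p v : N.V} (hpv : N.arc p v) (hv : N.inDeg v = 1) :
    N.Dominates p v := by
  rintro r hr ⟨-, -, hrv⟩
  rcases hrv.cases_tail with rfl | ⟨c, -, hcv, hcp, -⟩
  · have := hr.1
    omega
  · exact hcp (eq_of_arc_of_arc_of_inDeg_eq_one hv hpv hcv)

theorem visSet_subset_of_dominates (X : Finset α) {u v : N.V} (huv : N.Dominates u v) :
    N.visSet X v ⊆ N.visSet X u :=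
  fun _ ⟨hx, hvx⟩ => ⟨hx, huv.trans hvx⟩

theorem visSet_eq_of_dominates_of_dominates (X : Finset α) {u a b : N.V} (hua : N.Dominates u a)
    (hab : N.Dominates a b) (hbu : N.visSet X b = N.visSet X u) :
    N.visSet X a = N.visSet X u :=
  (visSet_subset_of_dominates X hua).antisymm (hbu ▸ visSet_subset_of_dominates X hab)

theorem IsBinary.isChain_dominates_of_treePath (hN : N.IsBinary) {u : N.V} {t : List N.V}
    (hpath : (u :: t).IsChain N.arc) (htree : ∀ w ∈ t, N.IsTreeVert w ∨ N.IsLeaf w) :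
    (u :: t).IsChain N.Dominates :=
  hpath.imp_of_mem_tail_imp fun _ _ _ hb hab =>
    dominates_of_arc_of_inDeg_eq_one hab (hN.inDeg_eq_one (htree _ hb))

theorem Dominates.mem_or_reflTransGen {r u a z : N.V} {t : List N.V} (huz : N.Dominates u z)
    (hr : N.IsRoot r) (ht : (a :: t).IsChain N.arc) (hz : z ∈ a :: t) :
    u ∈ a :: t ∨ Relation.ReflTransGen N.arc u a := by
  by_contra! ⟨hu, hua⟩
  have havoid : (a :: t).IsChain fun x y => N.arc x y ∧ y ≠ u :=
    ht.imp_of_mem_imp fun _ _ _ hy hxy => ⟨hxy, fun h => hu (h ▸ hy)⟩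
  exact huz r hr (havoid.induction (N.AvoidReach u r) _ (fun _ _ hxy h => h.tail hxy.1 hxy.2)
    (fun _ => avoidReach_of_not_reflTransGen (hr.2 a) hua) z hz)

end PhyloNet

open PhyloNet in
theorem visSet_class_on_path_general {α : Type} (X : Finset α) (N : PhyloNet α)
    (hN : N.IsNetworkOn X) (hnorm : N.Normal)
    (W : Set α)
    (U : Set N.V) (hU : U = {u : N.V | N.visSet X u = W}) (hUne : U.Nonempty) :
    ∃ l₁ l₂ l₃ : List N.V,
      (l₁ ++ l₂ ++ l₃).Chain' N.arc ∧
      (∀ u ∈ U, u ∈ l₂) ∧ (∀ w ∈ l₂, w ∈ U) ∧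
      (∀ w ∈ l₂.tail, N.IsTreeVert w ∨ N.IsLeaf w) := by
  classical
  subst hU
  obtain ⟨u₀, hu₀⟩ := hUne
  rcases hN.degrees with ⟨-, _⟩ | (hbin : N.IsBinary)
  · exact ⟨[], [u₀], [], List.isChain_singleton u₀,
      fun u _ => by simp [Subsingleton.elim u u₀], by simpa using hu₀, by simp⟩
  have := hN.finiteV
  obtain ⟨r, hr⟩ := hN.rooted
  obtain ⟨u₁, hu₁W, hmin⟩ :=
    (Relation.wellFounded_transGen_of_acyclic hN.acyclic).has_min _ ⟨u₀, hu₀⟩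
  obtain ⟨t, z, hpath, hz, hzleaf, htree⟩ :=
    exists_treePath_to_leaf hN.acyclic hnorm.1 hbin u₁
  have hdomChain := hbin.isChain_dominates_of_treePath hpath htree
  have hdom : ∀ w ∈ u₁ :: t, N.Dominates u₁ w :=
    hdomChain.induction _ _ (fun _ _ hxy h => h.trans hxy) (fun _ => Dominates.refl u₁)
  obtain ⟨x, hxX, rfl⟩ := hN.leaf_surj z hzleaf
  have hxW : x ∈ W := hu₁W ▸ ⟨hxX, hdom _ hz⟩
  have hUpath : ∀ u, N.visSet X u = W → u ∈ u₁ :: t := by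
    intro u huW
    rcases Dominates.mem_or_reflTransGen (huW ▸ hxW).2 hr hpath hz with hmem | hanc
    · exact hmem
    rcases Relation.reflTransGen_iff_eq_or_transGen.mp hanc with rfl | hlt
    · exact List.mem_cons_self
    · exact (hmin u huW hlt).elim
  have hclosed : (u₁ :: t).IsChain fun a b => N.visSet X b = W → N.visSet X a = W :=
    hdomChain.imp_of_mem_imp fun a _ ha _ hab hbW =>
      (visSet_eq_of_dominates_of_dominates X (hdom a ha) hab (hbW.trans hu₁W.symm)).trans hu₁W
  refine ⟨[], (u₁ :: t).takeWhile (N.visSet X · = W),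
    (u₁ :: t).dropWhile (N.visSet X · = W), ?_, fun u huW => ?_, fun w hw => ?_, fun w hw => ?_⟩
  · rw [List.nil_append, List.takeWhile_append_dropWhile]
    exact hpath
  · exact List.mem_takeWhile_of_isChain (by simpa using hclosed) (hUpath u huW) (by simpa)
  · simpa using List.mem_takeWhile_imp hw
  · rw [List.takeWhile_cons_of_pos (by simpa using hu₁W)] at hw
    exact htree w (List.takeWhile_subset _ hw)

open PhyloNet in
/-- In a normal network, the set `U` of vertices whose visibility
set equals a fixed nonempty `W ⊆ X` lies on a directed path; the subpath between
the first and last vertices of `U` consists exactly of the vertices of `U`, and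
all of its vertices, except possibly the first, are tree vertices or leaves. -/
theorem visSet_class_on_path {α : Type} (X : Finset α) (N : PhyloNet α)
    (hN : N.IsNetworkOn X) (hnorm : N.Normal)
    (W : Set α) (hWX : W ⊆ (↑X : Set α)) (hWne : W.Nonempty)
    (U : Set N.V) (hU : U = {u : N.V | N.visSet X u = W}) (hUne : U.Nonempty) :
    ∃ l₁ l₂ l₃ : List N.V,
      (l₁ ++ l₂ ++ l₃).Chain' N.arc ∧
      (∀ u ∈ U, u ∈ l₂) ∧ (∀ w ∈ l₂, w ∈ U) ∧
      (∀ w ∈ l₂.tail, N.IsTreeVert w ∨ N.IsLeaf w) :=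
  visSet_class_on_path_general X N hN hnorm W U hU hUne
end
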